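/- arXiv:2603.06489 — 4 statements merged into one kernel-verified Lean document; each statement's English description precedes it below -/
import Mathlib

section
/- For all natural numbers j and r, q^(j*r) equals the sum over i from 0 to r of [j choose i]_q * [r choose i]_q * prod_{s=0}^{i-1} (q^i - q^s), where [a choose b]_q denotes the Gaussian (q-)binomial coefficient. -/
/-- Gaussian binomial coefficient as a polynomial in `q`, evaluated at an integer. -/
def qb (q : ℤ) : ℕ → ℕ → ℤ
  | _, 0 => 1
  | 0, _+1 => 0
  | n+1, k+1 => qb q n k + q ^ (k+1) * qb q n (k+1)

/-- Hamming weight of a vector. -/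
noncomputable def hamWt {R : Type*} [Zero R] {n : ℕ} (x : Fin n → R) : ℕ :=
  Nat.card {i : Fin n // x i ≠ 0}

/-- The `n`-th harmonic number. -/
noncomputable def harm (n : ℕ) : ℝ := ∑ i ∈ Finset.range n, (1 : ℝ) / (i + 1)

/-- Expected number of i.i.d. uniform draws of columns of `G` (with replacement)
until the drawn columns span `F^k`, written as `∑_{t≥0} P(T > t)`. -/
noncomputable def coverDepth {F : Type*} [Field F] {k n : ℕ}
    (G : Matrix (Fin k) (Fin n) F) : ℝ :=
  ∑' t : ℕ, (Nat.card {f : Fin t → Fin n //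
      Submodule.span F (Set.range fun i => fun r => G r (f i)) ≠ ⊤} : ℝ) / (n : ℝ) ^ t

/-- Vectors whose support is contained in the finite set `S`. -/
def zeroOutside (F : Type*) [Field F] (n : ℕ) (S : Finset (Fin n)) :
    Submodule F (Fin n → F) where
  carrier := {x | ∀ i ∉ S, x i = 0}
  add_mem' := by intro a b ha hb i hi; simp [ha i hi, hb i hi]
  zero_mem' := by intro i hi; rfl
  smul_mem' := by intro c a ha i hi; simp [ha i hi]

/-- The dual code with respect to the standard bilinear form. -/
def dualCode (F : Type*) [Field F] (n : ℕ) (C : Submodule F (Fin n → F)) :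
    Submodule F (Fin n → F) where
  carrier := {y | ∀ x ∈ C, ∑ i, x i * y i = 0}
  add_mem' := by
    intro a b ha hb x hx
    simp only [Pi.add_apply, mul_add, Finset.sum_add_distrib, ha x hx, hb x hx, add_zero]
  zero_mem' := by intro x hx; simp
  smul_mem' := by
    intro c a ha x hx
    simp only [Pi.smul_apply, smul_eq_mul, mul_left_comm, ← Finset.mul_sum, ha x hx, mul_zero]

/-- Projection onto the coordinates indexed by `S`. -/
def projS (F : Type*) [Field F] {n : ℕ} (S : Finset (Fin n)) :
    (Fin n → F) →ₗ[F] ({x // x ∈ S} → F) :=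
  LinearMap.funLeft F F (fun i => (i : Fin n))

/-- The extension code of `C` over an extension field `E`. -/
def extCode {F E : Type*} [Field F] [Field E] [Algebra F E] {n : ℕ}
    (C : Submodule F (Fin n → F)) : Submodule E (Fin n → E) :=
  Submodule.span E ((fun c : Fin n → F => fun i => algebraMap F E (c i)) '' C)

lemma qb_succ_succ (q : ℤ) (n k : ℕ) :
    qb q (n+1) (k+1) = qb q n k + q ^ (k+1) * qb q n (k+1) := rfl

lemma qb_eq_zero (q : ℤ) : ∀ n k : ℕ, n < k → qb q n k = 0 := by
  intro n
  induction n with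
  | zero =>
    intro k hk
    match k, hk with
    | k+1, _ => rfl
  | succ n ih =>
    intro k hk
    match k, hk with
    | k+1, hk =>
      rw [qb_succ_succ, ih k (Nat.lt_of_succ_lt_succ hk),
        ih (k+1) (Nat.lt_of_succ_lt hk), mul_zero, add_zero]

lemma qb_zero (q : ℤ) (n : ℕ) : qb q n 0 = 1 := by cases n <;> rfl

lemma qb_key (q : ℤ) : ∀ r i : ℕ,
    q ^ i * (q ^ (i+1) - 1) * qb q r (i+1) = (q ^ r - q ^ i) * qb q r i := by
  intro r
  induction r with
  | zero =>
    intro i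
    rw [qb_eq_zero q 0 (i+1) (Nat.succ_pos i)]
    cases i with
    | zero => simp [qb]
    | succ i => rw [qb_eq_zero q 0 (i+1) (Nat.succ_pos i)]; ring
  | succ r ih =>
    intro i
    cases i with
    | zero =>
      have h0 := ih 0
      rw [qb_succ_succ]
      show q ^ 0 * (q ^ 1 - 1) * (qb q r 0 + q ^ 1 * qb q r 1) =
        (q ^ (r+1) - q ^ 0) * qb q (r+1) 0
      show q ^ 0 * (q ^ 1 - 1) * (qb q r 0 + q ^ 1 * qb q r 1) = (q ^ (r+1) - q ^ 0) * 1
      rw [qb_zero] at h0 ⊢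
      rw [pow_succ]
      linear_combination q * h0
    | succ k =>
      have h1 := ih k
      have h2 := ih (k+1)
      rw [qb_succ_succ q r (k+1), qb_succ_succ q r k]
      linear_combination q ^ (k+2) * h2 + q * h1

lemma prod_step (q : ℤ) (i : ℕ) :
    (∏ s ∈ Finset.range (i+1), (q ^ (i+1) - q ^ s)) =
      (q ^ (i+1) - 1) * q ^ i * ∏ s ∈ Finset.range i, (q ^ i - q ^ s) := by
  rw [Finset.prod_range_succ']
  have h : ∀ s ∈ Finset.range i, q ^ (i+1) - q ^ (s+1) = q * (q ^ i - q ^ s) := by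
    intro s _
    rw [pow_succ, pow_succ]; ring
  rw [Finset.prod_congr rfl h, Finset.prod_mul_distrib, Finset.prod_const,
    Finset.card_range, pow_zero]
  ring

theorem stmt0 (q : ℤ) (j r : ℕ) :
    q ^ (j * r) =
      ∑ i ∈ Finset.range (r + 1),
        qb q j i * qb q r i * ∏ s ∈ Finset.range i, (q ^ i - q ^ s) := by
  induction j with
  | zero =>
    rw [Nat.zero_mul, pow_zero, Finset.sum_range_succ']
    have h : ∀ i ∈ Finset.range r,
        qb q 0 (i+1) * qb q r (i+1) * ∏ s ∈ Finset.range (i+1), (q ^ (i+1) - q ^ s) = 0 := by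
      intro i _
      have : qb q 0 (i+1) = 0 := rfl
      rw [this]; ring
    rw [Finset.sum_congr rfl h, Finset.sum_const_zero]
    simp [qb]
  | succ j ih =>
    have step : ∀ i : ℕ,
        qb q j i * qb q r (i+1) * (∏ s ∈ Finset.range (i+1), (q ^ (i+1) - q ^ s)) =
        (q ^ r - q ^ i) * (qb q j i * qb q r i * ∏ s ∈ Finset.range i, (q ^ i - q ^ s)) := by
      intro i
      rw [prod_step q i]
      linear_combination qb q j i * (∏ s ∈ Finset.range i, (q ^ i - q ^ s)) * qb_key q r i
    -- split off the i = 0 term and expand qb (j+1)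
    rw [Finset.sum_range_succ']
    have expand : ∀ i ∈ Finset.range r,
        qb q (j+1) (i+1) * qb q r (i+1) * ∏ s ∈ Finset.range (i+1), (q ^ (i+1) - q ^ s) =
          (q ^ (i+1) * qb q j (i+1)) * qb q r (i+1) *
              (∏ s ∈ Finset.range (i+1), (q ^ (i+1) - q ^ s)) +
            (q ^ r - q ^ i) *
              (qb q j i * qb q r i * ∏ s ∈ Finset.range i, (q ^ i - q ^ s)) := by
      intro i _
      rw [qb_succ_succ, ← step i]
      ring
    rw [Finset.sum_congr rfl expand, Finset.sum_add_distrib]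
    have h0 : qb q (j+1) 0 * qb q r 0 * ∏ s ∈ Finset.range 0, (q ^ 0 - q ^ s) =
        (q ^ 0 * qb q j 0) * qb q r 0 * ∏ s ∈ Finset.range 0, (q ^ 0 - q ^ s) := by
      rw [qb_zero q (j+1), qb_zero q j]
      ring
    rw [add_right_comm, h0, ← Finset.sum_range_succ'
      (fun i => (q ^ i * qb q j i) * qb q r i * ∏ s ∈ Finset.range i, (q ^ i - q ^ s)) r]
    have hlast : (q ^ r - q ^ r) *
        (qb q j r * qb q r r * ∏ s ∈ Finset.range r, (q ^ r - q ^ s)) = 0 := by ring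
    rw [← add_zero (∑ i ∈ Finset.range r, (q ^ r - q ^ i) *
        (qb q j i * qb q r i * ∏ s ∈ Finset.range i, (q ^ i - q ^ s))), ← hlast,
      ← Finset.sum_range_succ
      (fun i => (q ^ r - q ^ i) *
        (qb q j i * qb q r i * ∏ s ∈ Finset.range i, (q ^ i - q ^ s))) r]
    rw [← Finset.sum_add_distrib]
    have comb : ∀ i ∈ Finset.range (r+1),
        ((q ^ i * qb q j i) * qb q r i * ∏ s ∈ Finset.range i, (q ^ i - q ^ s)) +
          (q ^ r - q ^ i) *
            (qb q j i * qb q r i * ∏ s ∈ Finset.range i, (q ^ i - q ^ s)) =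
        q ^ r * (qb q j i * qb q r i * ∏ s ∈ Finset.range i, (q ^ i - q ^ s)) := by
      intro i _; ring
    rw [Finset.sum_congr rfl comb, ← Finset.mul_sum, ← ih, ← pow_add]
    ring_nf
end

section
/- Let C ⊆ F_q^n be the q-ary simplex code of dimension k, with length n = (q^k - 1)/(q - 1). Then the expected number of uniformly random column draws (with replacement) from a generator matrix of C until the drawn columns span F_q^k equals k + sum_{i=1}^k (q^(i-1) - 1)/(q^k - q^(i-1)). -/
/-!
While the drawn columns span a subspace `W` of dimension `d`, a fresh draw stays inside `W` with
probability `m d / n`, where `m d = (q ^ d - 1) / (q - 1)` is the number of columns lying in `W`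
(they are representatives of the points of the projective space of `W`). Hence the number of
draws made at dimension `d` is geometric with mean `n / (n - m d)`, and the expected cover time is
`∑_{d < k} n / (n - m d) = ∑_{d < k} (1 + (q ^ d - 1) / (q ^ k - q ^ d))`.

Formally, `P(T > t) = ∑_{d < k} a t d / n ^ t`, where `a t d = rankCount F v t d` counts the
length-`t` sequences of draws whose span has dimension `d`. Appending a draw gives
`a (t + 1) (d + 1) = m (d + 1) * a t (d + 1) + (n - m d) * a t d`, and this recurrence determines
`∑_t a t d / n ^ t = n / (n - m d)` by induction on `d`.
-/

open Finset Module Submodule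
open scoped LinearAlgebra.Projectivization

theorem hasSum_of_succ_eq_mul_add {x β : ℕ → ℝ} {c B : ℝ} (hx : ∀ t, 0 ≤ x t)
    (hc₀ : 0 ≤ c) (hc₁ : c < 1) (hβ₀ : ∀ t, 0 ≤ β t) (hβ : HasSum β B)
    (hrec : ∀ t, x (t + 1) = c * x t + β t) :
    HasSum x ((x 0 + B) / (1 - c)) := by
  have hpartial (T : ℕ) : ∑ t ∈ range (T + 1), x t
      = x 0 + c * ∑ t ∈ range T, x t + ∑ t ∈ range T, β t := by
    rw [sum_range_succ', mul_sum, add_assoc, ← sum_add_distrib, add_comm]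
    simp only [hrec]
  have hbound (T : ℕ) : ∑ t ∈ range T, x t ≤ (x 0 + B) / (1 - c) := by
    rw [le_div_iff₀ (sub_pos.2 hc₁)]
    cases T with
    | zero => simpa using add_nonneg (hx 0) (hβ.nonneg hβ₀)
    | succ T =>
      have hβT := sum_le_hasSum (range T) (fun t _ => hβ₀ t) hβ
      have hmono : c * ∑ t ∈ range T, x t ≤ c * ∑ t ∈ range (T + 1), x t :=
        mul_le_mul_of_nonneg_left (by simpa [sum_range_succ] using hx T) hc₀
      linarith [hpartial T]
  have hS := (summable_of_sum_range_le hx hbound).hasSum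
  have hshift : HasSum (fun t => x (t + 1)) (∑' t, x t - x 0) := by
    simpa using (hasSum_nat_add_iff' 1).2 hS
  have hrec' : HasSum (fun t => x (t + 1)) (c * ∑' t, x t + B) := by
    simpa only [hrec] using (hS.mul_left c).add hβ
  convert hS using 1
  have := hshift.unique hrec'
  rw [div_eq_iff (sub_pos.2 hc₁).ne']
  linarith

lemma card_subtype_fun_fin_succ {ι : Type*} [Fintype ι] (t : ℕ)
    (P : (Fin (t + 1) → ι) → Prop) :
    Nat.card {g // P g} = ∑ f : Fin t → ι, Nat.card {i // P (Fin.cons i f)} := by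
  rw [← Nat.card_sigma]
  exact Nat.card_congr <|
    ((Fin.consEquiv fun _ => ι).symm.subtypeEquiv (q := fun p => P (Fin.cons p.1 p.2))
      (by simp)).trans <|
    ((Equiv.prodComm _ _).subtypeEquiv (by simp)).trans
      (Equiv.subtypeProdEquivSigmaSubtype fun f i => P (Fin.cons i f))

section Draws

variable (F : Type*) {V ι : Type*} [Field F] [AddCommGroup V] [Module F V] [Fintype ι]

noncomputable def rankCount (v : ι → V) (t d : ℕ) : ℕ :=
  Nat.card {f : Fin t → ι // finrank F (span F (Set.range (v ∘ f))) = d}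

variable {F} {v : ι → V} {m : ℕ → ℕ}

lemma rankCount_zero (d : ℕ) : rankCount F v 0 d = if d = 0 then 1 else 0 := by
  have hbot (f : Fin 0 → ι) : finrank F (span F (Set.range (v ∘ f))) = 0 := by
    rw [Set.range_eq_empty, span_empty, finrank_bot]
  rw [rankCount, Nat.card_congr (Equiv.subtypeEquivRight fun f => by rw [hbot f])]
  split_ifs with hd <;> simp [hd, eq_comm]

lemma sum_ite_finrank_span_eq (t d c : ℕ) :
    ∑ f : Fin t → ι, (if finrank F (span F (Set.range (v ∘ f))) = d then c else 0) =
      c * rankCount F v t d := by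
  classical
  rw [← sum_filter, sum_const, smul_eq_mul, mul_comm, rankCount, Nat.card_eq_fintype_card,
    Fintype.card_subtype]

variable [FiniteDimensional F V]

lemma card_finrank_span_insert_eq
    (hv : ∀ W : Submodule F V, Nat.card {i // v i ∈ W} = m (finrank F W))
    (s : Set V) (d : ℕ) :
    Nat.card {i // finrank F (span F (insert (v i) s)) = d} =
      (if finrank F (span F s) = d then m d else 0) +
      (if finrank F (span F s) + 1 = d then Fintype.card ι - m (finrank F (span F s))
        else 0) := by
  classical
  set W := span F s
  have hrank (i : ι) : finrank F (span F (insert (v i) s)) =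
      if v i ∈ W then finrank F W else finrank F W + 1 := by
    split_ifs with h
    · rw [span_insert_eq_span h]
    · rw [span_insert, sup_comm, finrank_sup_span_singleton h]
  simp only [hrank]
  by_cases hd : finrank F W = d
  · subst hd
    rw [if_pos rfl, if_neg (by omega), add_zero, ← hv W]
    exact Nat.card_congr (Equiv.subtypeEquivRight fun i => by split_ifs <;> simp [*])
  by_cases hd' : finrank F W + 1 = d
  · subst hd'
    rw [if_neg hd, if_pos rfl, zero_add, ← hv W, Nat.card_eq_fintype_card,
      Nat.card_eq_fintype_card, ← Fintype.card_subtype_compl]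
    exact Fintype.card_congr (Equiv.subtypeEquivRight fun i => by split_ifs <;> simp [*])
  · rw [if_neg hd, if_neg hd', Nat.card_eq_zero]
    exact Or.inl ⟨fun ⟨i, hi⟩ => by split_ifs at hi <;> omega⟩

lemma rankCount_succ_eq_sum
    (hv : ∀ W : Submodule F V, Nat.card {i // v i ∈ W} = m (finrank F W)) (t d : ℕ) :
    rankCount F v (t + 1) d = ∑ f : Fin t → ι,
      ((if finrank F (span F (Set.range (v ∘ f))) = d then m d else 0) +
      (if finrank F (span F (Set.range (v ∘ f))) + 1 = d then
        Fintype.card ι - m (finrank F (span F (Set.range (v ∘ f)))) else 0)) := by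
  rw [rankCount, card_subtype_fun_fin_succ]
  refine sum_congr rfl fun f _ => ?_
  have hcons (i : ι) : Set.range (v ∘ Fin.cons i f) = insert (v i) (Set.range (v ∘ f)) := by
    rw [Fin.comp_cons, Fin.range_cons]
  rw [← card_finrank_span_insert_eq hv]
  exact Nat.card_congr (Equiv.subtypeEquivRight fun i => by rw [hcons])

lemma rankCount_succ_zero
    (hv : ∀ W : Submodule F V, Nat.card {i // v i ∈ W} = m (finrank F W)) (t : ℕ) :
    rankCount F v (t + 1) 0 = m 0 * rankCount F v t 0 := by
  rw [rankCount_succ_eq_sum hv, ← sum_ite_finrank_span_eq]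
  simp only [Nat.add_one_ne_zero, if_false, add_zero]

lemma rankCount_succ_succ
    (hv : ∀ W : Submodule F V, Nat.card {i // v i ∈ W} = m (finrank F W)) (t d : ℕ) :
    rankCount F v (t + 1) (d + 1) =
      m (d + 1) * rankCount F v t (d + 1) + (Fintype.card ι - m d) * rankCount F v t d := by
  rw [rankCount_succ_eq_sum hv, sum_add_distrib, sum_ite_finrank_span_eq,
    ← sum_ite_finrank_span_eq t d]
  congr 1
  refine sum_congr rfl fun f _ => ?_
  simp only [Nat.add_right_cancel_iff]
  split_ifs with h <;> simp [h]

theorem hasSum_rankCount_div_pow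
    (hv : ∀ W : Submodule F V, Nat.card {i // v i ∈ W} = m (finrank F W)) {d : ℕ}
    (hm : ∀ e ≤ d, m e < Fintype.card ι) :
    HasSum (fun t => (rankCount F v t d : ℝ) / Fintype.card ι ^ t)
      (Fintype.card ι / (Fintype.card ι - m d)) := by
  set n := Fintype.card ι with hN
  have hn : (0 : ℝ) < n := by exact_mod_cast (Nat.zero_le _).trans_lt (hm 0 (Nat.zero_le d))
  have hmn {e} (he : m e < n) : (m e : ℝ) < n := by exact_mod_cast he
  have hc {e} (he : m e < n) : m e / (n : ℝ) < 1 := (div_lt_one hn).2 (hmn he)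
  have hsol (e : ℕ) (a : ℝ) : a / (1 - m e / (n : ℝ)) = a * n / (n - m e) := by
    rw [one_sub_div hn.ne', div_div_eq_mul_div]
  induction d with
  | zero =>
    have h := hasSum_of_succ_eq_mul_add (x := fun t => (rankCount F v t 0 : ℝ) / n ^ t)
      (fun t => by positivity) (by positivity) (hc (hm 0 le_rfl)) (fun _ => le_rfl) hasSum_zero
      (fun t => by simp only [rankCount_succ_zero hv, pow_succ]; push_cast; field_simp; ring)
    simpa [rankCount_zero, hsol 0] using h
  | succ d ih =>
    have hd : 0 < (n : ℝ) - m d := sub_pos.2 (hmn (hm d (by omega)))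
    have hprev := (ih fun e he => hm e (by omega)).mul_left (((n : ℝ) - m d) / n)
    rw [show (n - m d : ℝ) / n * (n / (n - m d)) = 1 by field_simp] at hprev
    have h := hasSum_of_succ_eq_mul_add (x := fun t => (rankCount F v t (d + 1) : ℝ) / n ^ t)
      (fun t => by positivity) (by positivity) (hc (hm (d + 1) le_rfl))
      (fun t => mul_nonneg (div_nonneg hd.le hn.le) (by positivity)) hprev
      (fun t => by
        simp only [rankCount_succ_succ hv, pow_succ, ← hN]
        push_cast [Nat.cast_sub (hm d (by omega)).le]
        field_simp)
    simpa [rankCount_zero, hsol (d + 1)] using h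

lemma card_span_ne_top_eq_sum_rankCount (t : ℕ) :
    Nat.card {f : Fin t → ι // span F (Set.range (v ∘ f)) ≠ ⊤} =
      ∑ d ∈ range (finrank F V), rankCount F v t d := by
  classical
  have hlt (f : Fin t → ι) :
      span F (Set.range (v ∘ f)) ≠ ⊤ ↔
        finrank F (span F (Set.range (v ∘ f))) < finrank F V :=
    ⟨finrank_lt, fun h htop => (h.trans_eq (by rw [htop, finrank_top])).false⟩
  rw [Nat.card_congr (Equiv.subtypeEquivRight hlt), Nat.card_eq_fintype_card,
    Fintype.card_subtype,
    card_eq_sum_card_fiberwise (t := range (finrank F V)) (fun f hf => by simpa using hf)]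
  refine sum_congr rfl fun d hd => ?_
  rw [rankCount, Nat.card_eq_fintype_card, Fintype.card_subtype, filter_filter]
  exact congrArg card
    (filter_congr fun f _ => and_iff_right_of_imp fun h => h ▸ mem_range.1 hd)

theorem hasSum_card_span_ne_top_div_pow
    (hv : ∀ W : Submodule F V, Nat.card {i // v i ∈ W} = m (finrank F W))
    (hm : ∀ d < finrank F V, m d < Fintype.card ι) :
    HasSum (fun t => (Nat.card {f : Fin t → ι // span F (Set.range (v ∘ f)) ≠ ⊤} : ℝ) /
        Fintype.card ι ^ t)
      (∑ d ∈ range (finrank F V), (Fintype.card ι : ℝ) / (Fintype.card ι - m d)) := by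
  simp only [card_span_ne_top_eq_sum_rankCount, Nat.cast_sum, sum_div]
  exact hasSum_sum fun d hd =>
    hasSum_rankCount_div_pow hv fun e he => hm e (he.trans_lt (mem_range.1 hd))

end Draws

lemma card_mem_eq_geom_sum {F V ι : Type*} [Field F] [Fintype F] [AddCommGroup V]
    [Module F V] {v : ι → V} (hnz : ∀ i, v i ≠ 0)
    (hinj : ∀ i i', (∃ c : F, c ≠ 0 ∧ v i' = c • v i) → i = i')
    (hsur : ∀ x : V, x ≠ 0 → ∃ i, ∃ c : F, c ≠ 0 ∧ x = c • v i)
    (W : Submodule F V) :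
    Nat.card {i // v i ∈ W} = ∑ j ∈ range (finrank F W), Fintype.card F ^ j := by
  have hnz' (i : {i // v i ∈ W}) : (⟨v i, i.2⟩ : W) ≠ 0 := by simpa using hnz i
  let toPoint (i : {i // v i ∈ W}) : ℙ F W := Projectivization.mk F _ (hnz' i)
  have hbij : Function.Bijective toPoint := by
    refine ⟨fun i j hij => ?_, fun p => ?_⟩
    · obtain ⟨c, hc⟩ := (Projectivization.mk_eq_mk_iff' F _ _ (hnz' i) (hnz' j)).1 hij
      have hc : c • v j = v i := congrArg Subtype.val hc
      have hc0 : c ≠ 0 := by rintro rfl; exact hnz i (by simpa using hc.symm)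
      exact Subtype.ext (hinj j i ⟨c, hc0, hc.symm⟩).symm
    · obtain ⟨i, c, hc, hpi⟩ := hsur p.rep (by simpa using p.rep_nonzero)
      have hi : v i ∈ W := by simpa [hpi, W.smul_mem_iff hc] using p.rep.2
      refine ⟨⟨i, hi⟩, ?_⟩
      conv_rhs => rw [← p.mk_rep]
      exact (Projectivization.mk_eq_mk_iff' F _ _ _ _).2
        ⟨c⁻¹, Subtype.ext (by simp [hpi, smul_smul, hc])⟩
  rw [Nat.card_eq_of_bijective toPoint hbij, Projectivization.card_of_finrank F W rfl,
    Nat.card_eq_fintype_card]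

lemma geom_sum_div_sub_geom_sum {q : ℝ} (hq : 1 < q) {d k : ℕ} (hdk : d < k) :
    (∑ i ∈ range k, q ^ i) / (∑ i ∈ range k, q ^ i - ∑ i ∈ range d, q ^ i) =
      1 + (q ^ d - 1) / (q ^ k - q ^ d) := by
  have hpow : q ^ d < q ^ k := pow_lt_pow_right₀ hq hdk
  have hq1 : q - 1 ≠ 0 := sub_ne_zero.2 hq.ne'
  rw [geom_sum_eq hq.ne', geom_sum_eq hq.ne', div_sub_div_same, sub_sub_sub_cancel_right,
    div_div_div_cancel_right₀ hq1, ← same_add_div (sub_pos.2 hpow).ne']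
  ring

theorem stmt7_general {F : Type*} [Field F] [Fintype F] {k n : ℕ}
    (G : Matrix (Fin k) (Fin n) F)
    (hnz : ∀ j : Fin n, (fun r => G r j) ≠ 0)
    (hinj : ∀ j j' : Fin n,
      (∃ c : F, c ≠ 0 ∧ (fun r => G r j') = c • fun r => G r j) → j = j')
    (hsur : ∀ v : Fin k → F, v ≠ 0 → ∃ j : Fin n, ∃ c : F, c ≠ 0 ∧ v = c • fun r => G r j) :
    coverDepth G = k + ∑ i ∈ Finset.range k,
      ((Fintype.card F : ℝ) ^ i - 1) /
        ((Fintype.card F : ℝ) ^ k - (Fintype.card F : ℝ) ^ i) := by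
  set q := Fintype.card F
  have hcount := card_mem_eq_geom_sum hnz hinj hsur
  have hn : n = ∑ i ∈ range k, q ^ i := by simpa using hcount ⊤
  have hm (d : ℕ) (hd : d < finrank F (Fin k → F)) :
      ∑ i ∈ range d, q ^ i < Fintype.card (Fin n) := by
    rw [finrank_fin_fun] at hd
    rw [Fintype.card_fin, hn]
    exact sum_lt_sum_of_subset (range_subset_range.2 hd.le) (mem_range.2 hd) (by simp)
      (by positivity) fun _ _ _ => by positivity
  have key := hasSum_card_span_ne_top_div_pow hcount hm
  simp only [Fintype.card_fin, finrank_fin_fun] at key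
  refine key.tsum_eq.trans ?_
  rw [hn]
  push_cast
  have hq : (1 : ℝ) < q := by exact_mod_cast Fintype.one_lt_card
  rw [sum_congr rfl fun d hd => geom_sum_div_sub_geom_sum hq (mem_range.1 hd), sum_add_distrib]
  simp

theorem stmt7 {F : Type*} [Field F] [Fintype F] {k n : ℕ} (hk : 2 ≤ k)
    (G : Matrix (Fin k) (Fin n) F)
    (hn : n * (Fintype.card F - 1) = Fintype.card F ^ k - 1)
    (hnz : ∀ j : Fin n, (fun r => G r j) ≠ 0)
    (hinj : ∀ j j' : Fin n,
      (∃ c : F, c ≠ 0 ∧ (fun r => G r j') = c • fun r => G r j) → j = j')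
    (hsur : ∀ v : Fin k → F, v ≠ 0 → ∃ j : Fin n, ∃ c : F, c ≠ 0 ∧ v = c • fun r => G r j) :
    coverDepth G = k + ∑ i ∈ Finset.range k,
      ((Fintype.card F : ℝ) ^ i - 1) /
        ((Fintype.card F : ℝ) ^ k - (Fintype.card F : ℝ) ^ i) :=
  stmt7_general G hnz hinj hsur
end

section
/- For a k-dimensional linear code C ⊆ F_q^n, the coverage depth expectation satisfies E[C] = n·H_n − sum_{s=k}^{n-1} α(C,s)/binom(n-1,s), where α(C,s) is the number of information sets of C of cardinality s and H_n is the n-th harmonic number. -/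
/-!
Write `E[C] = ∑_{t ≥ 0} P(T > t)`. The event `T > t` says that the set `U` of columns drawn in
the first `t` draws does not span, so `E[C] = ∑_{U not spanning} V(U)`, where `V(U)`
(`sojournTime U`) is the expected number of times `t` at which the set of drawn columns is
exactly `U`. Conditioning on the first draw gives `(n - |U|) V(U) = ∑_{a ∈ U} V(U \ {a})` for
nonempty `U ≠ univ`, whence `V(U) = 1 / C(n-1, |U|)` by induction on `|U|`. Finally, the
non-spanning sets are all proper subsets minus the spanning ones, and
`∑_{u < n} C(n, u) / C(n-1, u) = ∑_{u < n} n / (n - u) = n H_n`.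
-/

open Finset

lemma Finset.insert_eq_iff_of_mem {α : Type*} [DecidableEq α] {a : α} {U : Finset α} (ha : a ∈ U)
    (V : Finset α) : insert a V = U ↔ V = U ∨ V = U.erase a := by
  constructor
  · rintro rfl
    by_cases haV : a ∈ V
    · exact .inl (insert_eq_of_mem haV).symm
    · exact .inr (erase_insert haV).symm
  · rintro (rfl | rfl)
    · exact insert_eq_of_mem ha
    · exact insert_erase ha

lemma Finset.image_univ_fin_cons {α : Type*} [DecidableEq α] {t : ℕ} (a : α) (g : Fin t → α) :
    univ.image (Fin.cons a g : Fin (t + 1) → α) = insert a (univ.image g) := by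
  ext x
  simp [Fin.exists_fin_succ, eq_comm]

section Sojourn

variable {ι : Type*} [Fintype ι] [DecidableEq ι]

def tuplesWithImage (t : ℕ) (U : Finset ι) : Finset (Fin t → ι) :=
  {f | univ.image f = U}

noncomputable def sojournTime (U : Finset ι) : ℝ :=
  ∑' t, (#(tuplesWithImage t U) : ℝ) / Fintype.card ι ^ t

lemma card_tuplesWithImage_zero (U : Finset ι) :
    #(tuplesWithImage 0 U) = if U = ∅ then 1 else 0 := by
  by_cases hU : U = ∅ <;> simp [tuplesWithImage, hU, eq_comm]

lemma card_tuplesWithImage_succ (t : ℕ) (U : Finset ι) :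
    #(tuplesWithImage (t + 1) U) =
      ∑ a ∈ U, (#(tuplesWithImage t U) + #(tuplesWithImage t (U.erase a))) := by
  have hcons (a : ι) : #{g : Fin t → ι | insert a (univ.image g) = U} =
      if a ∈ U then #(tuplesWithImage t U) + #(tuplesWithImage t (U.erase a)) else 0 := by
    split_ifs with ha
    · simp_rw [insert_eq_iff_of_mem ha, filter_or]
      refine card_union_of_disjoint (disjoint_filter.2 fun g _ h h' => ?_)
      exact (erase_ne_self.2 ha) (h'.symm.trans h)
    · refine card_eq_zero.2 (filter_false_of_mem fun g _ h => ha ?_)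
      exact h ▸ mem_insert_self a _
  calc #(tuplesWithImage (t + 1) U)
      = #{p : ι × (Fin t → ι) | insert p.1 (univ.image p.2) = U} :=
        (card_equiv (Fin.consEquiv fun _ => ι) fun p => by
          simp [tuplesWithImage, Fin.consEquiv, image_univ_fin_cons]).symm
    _ = ∑ a, #{g : Fin t → ι | insert a (univ.image g) = U} := by
        simp only [card_filter, Fintype.sum_prod_type]
    _ = _ := by simp_rw [hcons, sum_ite_mem, univ_inter]

lemma card_tuplesWithImage_le (t : ℕ) (U : Finset ι) : #(tuplesWithImage t U) ≤ #U ^ t :=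
  calc #(tuplesWithImage t U) ≤ #(Fintype.piFinset fun _ : Fin t => U) := by
        refine card_le_card fun f hf => Fintype.mem_piFinset.2 fun i => ?_
        exact (mem_filter.1 hf).2 ▸ mem_image_of_mem f (mem_univ i)
    _ = #U ^ t := by simp

lemma summable_card_tuplesWithImage {U : Finset ι} (hU : #U < Fintype.card ι) :
    Summable fun t => (#(tuplesWithImage t U) : ℝ) / Fintype.card ι ^ t := by
  have hn : (0 : ℝ) < Fintype.card ι := Nat.cast_pos.2 ((Nat.zero_le _).trans_lt hU)
  refine .of_nonneg_of_le (fun t => by positivity) (fun t => ?_)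
    (summable_geometric_of_lt_one (r := #U / Fintype.card ι) (by positivity)
      ((div_lt_one hn).2 (by exact_mod_cast hU)))
  rw [div_pow]
  exact div_le_div_of_nonneg_right (by exact_mod_cast card_tuplesWithImage_le t U) (by positivity)

lemma card_sub_card_mul_sojournTime {U : Finset ι} (hne : U.Nonempty) (hU : #U < Fintype.card ι) :
    ((Fintype.card ι : ℝ) - #U) * sojournTime U = ∑ a ∈ U, sojournTime (U.erase a) := by
  set n := Fintype.card ι
  have hn : (n : ℝ) ≠ 0 := Nat.cast_ne_zero.2 (by omega)
  have hs := summable_card_tuplesWithImage hU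
  have hsa (a : ι) : Summable fun t => (#(tuplesWithImage t (U.erase a)) : ℝ) / n ^ t :=
    summable_card_tuplesWithImage (card_erase_le.trans_lt hU)
  have hstep (t : ℕ) : n * ((#(tuplesWithImage (t + 1) U) : ℝ) / n ^ (t + 1)) =
      #U * ((#(tuplesWithImage t U) : ℝ) / n ^ t) +
        ∑ a ∈ U, (#(tuplesWithImage t (U.erase a)) : ℝ) / n ^ t := by
    rw [pow_succ', ← div_div, mul_div_assoc', mul_div_cancel₀ _ hn, card_tuplesWithImage_succ,
      sum_add_distrib, sum_const, smul_eq_mul, ← sum_div]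
    push_cast
    ring
  have hzero : (#(tuplesWithImage 0 U) : ℝ) / n ^ 0 = 0 := by
    rw [card_tuplesWithImage_zero, if_neg hne.ne_empty, Nat.cast_zero, zero_div]
  suffices n * sojournTime U = #U * sojournTime U + ∑ a ∈ U, sojournTime (U.erase a) by
    linear_combination this
  simp only [sojournTime]
  rw [hs.tsum_eq_zero_add, hzero, zero_add, ← tsum_mul_left, tsum_congr hstep,
    (hs.mul_left _).tsum_add (summable_sum fun a _ => hsa a), tsum_mul_left,
    Summable.tsum_finsetSum fun a _ => hsa a, hs.tsum_eq_zero_add, hzero, zero_add]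

lemma sojournTime_eq {U : Finset ι} (hU : #U < Fintype.card ι) :
    sojournTime U = 1 / ((Fintype.card ι - 1).choose #U : ℝ) := by
  set n := Fintype.card ι
  induction hm : #U generalizing U with
  | zero =>
    obtain rfl : U = ∅ := card_eq_zero.1 hm
    have hterm (t : ℕ) : (#(tuplesWithImage t (∅ : Finset ι)) : ℝ) / n ^ t =
        if t = 0 then 1 else 0 := by
      cases t <;> simp [card_tuplesWithImage_zero, card_tuplesWithImage_succ]
    exact (tsum_congr hterm).trans (by simp)
  | succ m ih =>
    have herase (a : ι) (ha : a ∈ U) : sojournTime (U.erase a) = 1 / ((n - 1).choose m : ℝ) :=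
      ih (card_erase_le.trans_lt hU) (by rw [card_erase_of_mem ha, hm]; rfl)
    have hrec := card_sub_card_mul_sojournTime (card_pos.1 (hm ▸ m.succ_pos)) hU
    rw [sum_congr rfl herase, sum_const, hm, nsmul_eq_mul] at hrec
    push_cast at hrec
    rw [hm] at hU
    have hchoose : ((n - 1).choose (m + 1) : ℝ) * (m + 1) = (n - 1).choose m * (n - (m + 1)) := by
      have h := Nat.choose_succ_right_eq (n - 1) m
      rw [Nat.sub_sub, Nat.add_comm 1 m] at h
      have h' := congrArg (Nat.cast : ℕ → ℝ) h
      push_cast [Nat.cast_sub hU.le] at h'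
      exact h'
    have hpos : ((n - 1).choose m : ℝ) ≠ 0 := Nat.cast_ne_zero.2 (Nat.choose_pos (by omega)).ne'
    refine eq_one_div_of_mul_eq_one_left (mul_left_cancel₀ m.cast_add_one_ne_zero ?_)
    linear_combination sojournTime U * hchoose + ((n - 1).choose m : ℝ) * hrec +
      (m + 1 : ℝ) * one_div_mul_cancel hpos

lemma card_filter_image_eq_sum (P : Finset ι → Prop) [DecidablePred P] (t : ℕ) :
    #{f : Fin t → ι | P (univ.image f)} = ∑ U with P U, #(tuplesWithImage t U) := by
  rw [card_eq_sum_card_fiberwise (f := fun f => univ.image f) (t := univ.filter P)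
    fun f hf => mem_filter.2 ⟨mem_univ _, (mem_filter.1 hf).2⟩]
  refine sum_congr rfl fun U hU => ?_
  rw [tuplesWithImage, filter_filter]
  refine congrArg card (filter_congr fun f _ => ?_)
  exact ⟨fun h => h.2, fun h => ⟨by simpa [h] using (mem_filter.1 hU).2, h⟩⟩

lemma tsum_card_filter_image (P : Finset ι → Prop) [DecidablePred P] (hP : ¬ P univ) :
    ∑' t, (#{f : Fin t → ι | P (univ.image f)} : ℝ) / Fintype.card ι ^ t =
      ∑ U with P U, 1 / ((Fintype.card ι - 1).choose #U : ℝ) := by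
  have hcard {U : Finset ι} (hU : U ∈ univ.filter P) : #U < Fintype.card ι :=
    (card_lt_iff_ne_univ U).2 fun h => hP (h ▸ (mem_filter.1 hU).2)
  simp_rw [card_filter_image_eq_sum, Nat.cast_sum, sum_div]
  rw [Summable.tsum_finsetSum fun U hU => summable_card_tuplesWithImage (hcard hU)]
  exact sum_congr rfl fun U hU => sojournTime_eq (hcard hU)

end Sojourn

lemma choose_div_choose_pred {n m : ℕ} (hm : m < n) :
    (n.choose m : ℝ) / (n - 1).choose m = n / (n - m) := by
  have h := Nat.choose_mul_succ_eq (n - 1) m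
  rw [Nat.sub_add_cancel (by omega)] at h
  have hpos : 0 < (n - 1).choose m := Nat.choose_pos (by omega)
  have hnm : (n : ℝ) - m ≠ 0 := sub_ne_zero.2 (by exact_mod_cast hm.ne')
  rw [div_eq_div_iff (by positivity) hnm]
  have h' := congrArg (Nat.cast : ℕ → ℝ) h
  push_cast [Nat.cast_sub hm.le] at h'
  linarith

lemma sum_range_choose_div_choose_pred (n : ℕ) :
    ∑ m ∈ range n, (n.choose m : ℝ) / (n - 1).choose m = n * harm n := by
  rw [sum_congr rfl fun m hm => choose_div_choose_pred (mem_range.1 hm), harm,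
    mul_sum, ← sum_range_reflect]
  refine sum_congr rfl fun j hj => ?_
  have hcast : ((n - 1 - j : ℕ) : ℝ) = n - (j + 1) := by
    rw [Nat.sub_sub, Nat.cast_sub (by have := mem_range.1 hj; omega)]; push_cast; ring
  rw [hcast, sub_sub_cancel, mul_one_div]

section GroupByCard

variable {ι : Type*} [Fintype ι] [Nonempty ι]

lemma sum_one_div_choose_pred_card :
    ∑ U : Finset ι, 1 / ((Fintype.card ι - 1).choose #U : ℝ) =
      Fintype.card ι * harm (Fintype.card ι) := by
  have hpos := Fintype.card_pos (α := ι)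
  -- the term `U = univ` is `1 / 0 = 0`
  rw [← powerset_univ, sum_powerset_apply_card fun m => 1 / ((Fintype.card ι - 1).choose m : ℝ),
    card_univ, sum_range_succ, Nat.choose_eq_zero_of_lt (Nat.sub_one_lt hpos.ne'), Nat.cast_zero,
    div_zero, smul_zero, add_zero, ← sum_range_choose_div_choose_pred]
  simp only [nsmul_eq_mul, mul_one_div]

lemma sum_filter_one_div_choose_pred (Q : Finset ι → Prop) [DecidablePred Q] (d : ℕ)
    (hQ : ∀ U, Q U → d ≤ #U) :
    ∑ U with Q U, 1 / ((Fintype.card ι - 1).choose #U : ℝ) =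
      ∑ s ∈ Icc d (Fintype.card ι - 1),
        (Nat.card {S : Finset ι // #S = s ∧ Q S} : ℝ) / (Fintype.card ι - 1).choose s := by
  have hpos := Fintype.card_pos (α := ι)
  rw [← sum_fiberwise_of_maps_to (g := card) (t := range (Fintype.card ι + 1))
    fun U _ => mem_range.2 (Nat.lt_succ_of_le (card_le_univ U))]
  simp only [Nat.card_eq_fintype_card, Fintype.card_subtype]
  have hfiber (s : ℕ) :
      ∑ U ∈ {U ∈ univ.filter Q | #U = s}, 1 / ((Fintype.card ι - 1).choose #U : ℝ) =
        #{S | #S = s ∧ Q S} / (Fintype.card ι - 1).choose s := by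
    rw [sum_congr rfl fun U hU => by rw [(mem_filter.1 hU).2], sum_const, nsmul_eq_mul,
      mul_one_div, filter_filter]
    simp_rw [and_comm]
  simp_rw [hfiber]
  refine (sum_subset (fun s hs => ?_) fun s hs hs' => ?_).symm
  · exact mem_range.2 (by have := mem_Icc.1 hs; omega)
  · rcases lt_or_ge s d with hsd | hsd
    · rw [card_eq_zero.2 (filter_false_of_mem fun S _ hS => ?_), Nat.cast_zero, zero_div]
      exact absurd (hQ S hS.2) (by omega)
    · have hlt : Fintype.card ι - 1 < s := by
        simp only [mem_range, mem_Icc, not_and, not_le] at hs hs'; omega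
      -- the full set contributes `1 / 0 = 0`
      rw [Nat.choose_eq_zero_of_lt hlt, Nat.cast_zero, div_zero]

end GroupByCard

lemma finrank_le_card_of_span_image_eq_top {K M ι : Type*} [DivisionRing K] [AddCommGroup M]
    [Module K M] (v : ι → M) {U : Finset ι} (hU : Submodule.span K (v '' U) = ⊤) :
    Module.finrank K M ≤ #U := by
  classical
  calc Module.finrank K M = Module.finrank K (Submodule.span K (v '' U)) := by
        rw [hU, finrank_top]
    _ ≤ #(U.image v) := by
        rw [← coe_image]; exact finrank_span_finset_le_card (U.image v)
    _ ≤ #U := card_image_le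

lemma Matrix.span_col_eq_top_of_rank_eq {m n K : Type*} [Fintype m] [Fintype n] [Field K]
    (A : Matrix m n K) (hA : A.rank = Fintype.card m) :
    Submodule.span K (Set.range A.col) = ⊤ :=
  Submodule.eq_top_of_finrank_eq <| by
    rw [← A.rank_eq_finrank_span_cols, hA, Module.finrank_fintype_fun_eq_card]

open Classical in
lemma coverDepth_eq_sum_not_spanning {F : Type*} [Field F] {k n : ℕ}
    (G : Matrix (Fin k) (Fin n) F) (hG : G.rank = k) :
    coverDepth G = ∑ U ∈ univ.filter fun U : Finset (Fin n) =>
        Submodule.span F ((fun j r => G r j) '' (U : Set (Fin n))) ≠ ⊤,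
      1 / ((n - 1).choose #U : ℝ) := by
  have hspan : Submodule.span F ((fun j r => G r j) '' (univ : Finset (Fin n))) = ⊤ := by
    rw [coe_univ, Set.image_univ]
    exact G.span_col_eq_top_of_rank_eq (by rw [hG, Fintype.card_fin])
  have h := tsum_card_filter_image
    (fun U : Finset (Fin n) => Submodule.span F ((fun j r => G r j) '' (U : Set (Fin n))) ≠ ⊤)
    (not_not.2 hspan)
  simp only [Fintype.card_fin] at h
  rw [← h, coverDepth]
  refine tsum_congr fun t => ?_
  simp only [Nat.card_eq_fintype_card, Fintype.card_subtype, coe_image, coe_univ, Set.image_univ,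
    ← Set.range_comp]
  rfl

theorem stmt8_general {F : Type*} [Field F] {k n : ℕ} (hk : 2 ≤ k) (hkn : k ≤ n)
    (G : Matrix (Fin k) (Fin n) F) (hG : G.rank = k) :
    coverDepth G = n * harm n - ∑ s ∈ Finset.Icc k (n - 1),
      (Nat.card {S : Finset (Fin n) // S.card = s ∧
          Submodule.span F ((fun j => fun r => G r j) '' (S : Set (Fin n))) = ⊤} : ℝ) /
        ((n - 1).choose s) := by
  classical
  have : Nonempty (Fin n) := ⟨⟨0, by omega⟩⟩
  have hcard_spanning (U : Finset (Fin n))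
      (hU : Submodule.span F ((fun j r => G r j) '' (U : Set (Fin n))) = ⊤) : k ≤ #U := by
    simpa using finrank_le_card_of_span_image_eq_top _ hU
  have hsum_all := sum_one_div_choose_pred_card (ι := Fin n)
  have hsum_spanning := sum_filter_one_div_choose_pred _ k hcard_spanning
  rw [Fintype.card_fin] at hsum_all hsum_spanning
  rw [coverDepth_eq_sum_not_spanning G hG, ← hsum_all, ← hsum_spanning]
  exact eq_sub_of_add_eq (sum_filter_not_add_sum_filter _ _ _)

theorem stmt8 {F : Type*} [Field F] [Fintype F] {k n : ℕ} (hk : 2 ≤ k) (hkn : k ≤ n)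
    (G : Matrix (Fin k) (Fin n) F) (hG : G.rank = k) :
    coverDepth G = n * harm n - ∑ s ∈ Finset.Icc k (n - 1),
      (Nat.card {S : Finset (Fin n) // S.card = s ∧
          Submodule.span F ((fun j => fun r => G r j) '' (S : Set (Fin n))) = ⊤} : ℝ) /
        ((n - 1).choose s) :=
  stmt8_general hk hkn G hG
end

section
/- Let C ⊆ F_q^n be a linear code of dimension k. For 0 ≤ ℓ ≤ k and 0 ≤ s ≤ n, let β_ℓ(C,s) be the number of s-subsets S ⊆ {1,...,n} with dim(C(S^c)) = ℓ. Then β_ℓ(C,s) = β_{ℓ+s−k}(C^⊥, n−s) whenever ℓ + s − k ≥ 0. -/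
/-- `β_ℓ(C,s)`: the number of `s`-subsets `S` with `dim C(Sᶜ) = ℓ`. -/
noncomputable def betaNum {F : Type*} [Field F] {n : ℕ}
    (C : Submodule F (Fin n → F)) (ℓ s : ℕ) : ℕ :=
  Nat.card {S : Finset (Fin n) // S.card = s ∧
    Module.finrank F ↥(C ⊓ zeroOutside F n Sᶜ) = ℓ}


section Aux

open Module Submodule

variable {F : Type*} [Field F] {n : ℕ}

/-- The standard pairing as a linear map into the dual. -/
def PhiL (F : Type*) [Field F] (n : ℕ) :
    (Fin n → F) →ₗ[F] Module.Dual F (Fin n → F) where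
  toFun y :=
    { toFun := fun x => ∑ i, x i * y i
      map_add' := by intro a b; simp [add_mul, Finset.sum_add_distrib]
      map_smul' := by intro c a; simp [Finset.mul_sum, mul_assoc] }
  map_add' := by
    intro a b; ext x; simp [mul_add, Finset.sum_add_distrib]
  map_smul' := by
    intro c a; ext x; simp [Finset.mul_sum, mul_left_comm]

lemma phiL_apply (y x : Fin n → F) : PhiL F n y x = ∑ i, x i * y i := rfl

lemma phiL_eval (g : Module.Dual F (Fin n → F)) (x : Fin n → F) :
    ∑ i, x i * g (Pi.single i 1) = g x := by
  have hx : x = ∑ i, x i • (Pi.single i (1 : F) : Fin n → F) := by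
    funext j
    simp [Finset.sum_apply, Pi.single_apply, Finset.sum_ite_eq', mul_comm]
  conv_rhs => rw [hx]
  simp [map_sum, smul_eq_mul]

lemma phiL_injective : Function.Injective (PhiL F n) := by
  intro a b hab
  funext i
  have := congrArg (fun g => g (Pi.single i (1 : F))) hab
  simpa [phiL_apply, Pi.single_apply, Finset.sum_ite_eq'] using this

lemma mem_zeroOutside {S : Finset (Fin n)} {x : Fin n → F} :
    x ∈ zeroOutside F n S ↔ ∀ i ∉ S, x i = 0 := Iff.rfl

lemma map_dualCode (C : Submodule F (Fin n → F)) :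
    Submodule.map (PhiL F n) (dualCode F n C) = C.dualAnnihilator := by
  ext g
  simp only [Submodule.mem_map, Submodule.mem_dualAnnihilator]
  constructor
  · rintro ⟨y, hy, rfl⟩ x hx
    exact hy x hx
  · intro hg
    refine ⟨fun i => g (Pi.single i 1), ?_, ?_⟩
    · intro x hx
      rw [phiL_eval]
      exact hg x hx
    · exact LinearMap.ext fun x => phiL_eval g x
  
lemma map_zeroOutside (S : Finset (Fin n)) :
    Submodule.map (PhiL F n) (zeroOutside F n S) = (zeroOutside F n Sᶜ).dualAnnihilator := by
  ext g
  simp only [Submodule.mem_map, Submodule.mem_dualAnnihilator]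
  constructor
  · rintro ⟨y, hy, rfl⟩ x hx
    rw [phiL_apply]
    refine Finset.sum_eq_zero fun i _ => ?_
    by_cases hi : i ∈ S
    · have : x i = 0 := (mem_zeroOutside.mp hx) i (by simpa using hi)
      simp [this]
    · have : y i = 0 := (mem_zeroOutside.mp hy) i hi
      simp [this]
  · intro hg
    refine ⟨fun i => g (Pi.single i 1), ?_, ?_⟩
    · intro i hi
      refine hg _ ?_
      intro j hj
      have hji : j ≠ i := by
        intro hji; subst hji; exact hj (by simpa using hi)
      simp [Pi.single_apply, hji]
    · exact LinearMap.ext fun x => phiL_eval g x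

lemma zeroOutside_equiv (S : Finset (Fin n)) :
    Nonempty ((zeroOutside F n S) ≃ₗ[F] ({i // i ∈ S} → F)) := by
  refine ⟨LinearEquiv.ofBijective
    ({ toFun := fun x i => (x : Fin n → F) i
       map_add' := fun a b => rfl
       map_smul' := fun c a => rfl } :
      (zeroOutside F n S) →ₗ[F] ({i // i ∈ S} → F)) ⟨?_, ?_⟩⟩
  · intro a b hab
    ext i
    by_cases hi : i ∈ S
    · exact congrFun hab ⟨i, hi⟩
    · rw [a.2 i hi, b.2 i hi]
  · intro g
    refine ⟨⟨fun i => if h : i ∈ S then g ⟨i, h⟩ else 0, ?_⟩, ?_⟩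
    · intro i hi
      simp [hi]
    · funext i
      simp

lemma finrank_zeroOutside (S : Finset (Fin n)) :
    Module.finrank F (zeroOutside F n S) = S.card := by
  obtain ⟨e⟩ := zeroOutside_equiv (F := F) S
  rw [e.finrank_eq]
  simp [Module.finrank_pi]

lemma finrank_dualAnnihilator (W : Submodule F (Fin n → F)) :
    Module.finrank F W.dualAnnihilator + Module.finrank F W = n := by
  have h1 : Module.finrank F W.dualAnnihilator
      = Module.finrank F ((Fin n → F) ⧸ W) :=
    (Subspace.quotEquivAnnihilator W).finrank_eq.symm
  have h2 := Submodule.finrank_quotient_add_finrank W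
  rw [h1, h2]
  simp [Module.finrank_pi]

lemma finrank_eq_of_eq {A B : Submodule F (Fin n → F)} (h : A = B) :
    Module.finrank F A = Module.finrank F B := by subst h; rfl

lemma key_rank (C : Submodule F (Fin n → F)) (T : Finset (Fin n)) :
    Module.finrank F ↥(dualCode F n C ⊓ zeroOutside F n Tᶜ) + Module.finrank F ↥C + T.card
      = n + Module.finrank F ↥(C ⊓ zeroOutside F n T) := by
  have hmap : Submodule.map (PhiL F n) (dualCode F n C ⊓ zeroOutside F n Tᶜ)
      = (C ⊔ zeroOutside F n T).dualAnnihilator := by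
    rw [Submodule.map_inf _ phiL_injective, map_dualCode, map_zeroOutside, compl_compl,
      Submodule.dualAnnihilator_sup_eq]
  have h1 : Module.finrank F ↥(dualCode F n C ⊓ zeroOutside F n Tᶜ)
      = Module.finrank F (C ⊔ zeroOutside F n T).dualAnnihilator := by
    rw [← hmap]
    exact (Submodule.equivMapOfInjective _ phiL_injective _).finrank_eq
  have h2 := finrank_dualAnnihilator (C ⊔ zeroOutside F n T)
  have h3 := Submodule.finrank_sup_add_finrank_inf_eq C (zeroOutside F n T)
  have h4 := finrank_zeroOutside (F := F) T
  omega

end Aux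

theorem stmt13 {F : Type*} [Field F] {n k : ℕ}
    (C : Submodule F (Fin n → F)) (hC : Module.finrank F C = k)
    (ℓ s : ℕ) (hl : ℓ ≤ k) (hs : s ≤ n) (h : k ≤ ℓ + s) :
    betaNum C ℓ s = betaNum (dualCode F n C) (ℓ + s - k) (n - s) := by
  have hkn : k ≤ n := by
    rw [← hC]
    have := Submodule.finrank_le C
    simpa [Module.finrank_pi] using this
  have main : ∀ S : Finset (Fin n),
      (S.card = s ∧ Module.finrank F ↥(C ⊓ zeroOutside F n Sᶜ) = ℓ) ↔
      (Sᶜ.card = n - s ∧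
        Module.finrank F ↥(dualCode F n C ⊓ zeroOutside F n Sᶜᶜ) = ℓ + s - k) := by
    intro S
    have hk := key_rank C Sᶜ
    rw [hC] at hk
    have hc : Sᶜ.card = n - S.card := by simp [Finset.card_compl]
    have hcle : S.card ≤ n := by
      simpa using Finset.card_le_univ S
    omega
  unfold betaNum
  refine Nat.card_congr ⟨fun S => ⟨S.1ᶜ, (main S.1).mp S.2⟩,
    fun T => ⟨T.1ᶜ, ?_⟩, fun S => ?_, fun T => ?_⟩
  · refine (main T.1ᶜ).mpr ⟨by simpa using T.2.1, ?_⟩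
    rw [finrank_eq_of_eq
      (show (dualCode F n C ⊓ zeroOutside F n T.1ᶜᶜᶜ : Submodule F (Fin n → F))
        = dualCode F n C ⊓ zeroOutside F n T.1ᶜ by rw [compl_compl])]
    exact T.2.2
  · exact Subtype.ext (by simp)
  · exact Subtype.ext (by simp)
end
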